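/- Let G and H be connected graphs, let V(H) = {v_1, …, v_n} with n ≥ 3, and consider G □ H with labeled copies G_1, …, G_n of G, where G_i is the fiber of G over the vertex v_i of H. Let c be an exact r-coloring of G □ H with r ≥ 3 that contains no rainbow 3-AP, and suppose each copy G_i uses at most 2 colors. Then for every edge v_i v_j of H, the number of distinct colors used on V(G_i) ∪ V(G_j) is at most 2. -/

import Mathlib

/-!
Distances add up in `G □ H`, so the absence of rainbow 3-APs says: if `d(x,y) = d(y,w)` and
`c x ≠ c y ≠ c w`, then `c x = c w`. If two adjacent fibers `p, q` carry three colors, there is a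
rainbow corner: vertices `(b,p), (z,p), (z,q)` with three distinct colors `B, A, Γ`. Take one with
`d_G(z,b)` minimal. Minimality makes `A` the only color of fiber `p` strictly closer to `z` than
`b`; from this, `c(b,q) = A`, `d_G(z,b)` is even, and every fiber `k ≠ q` adjacent to `p`
satisfies `c(z,k) = Γ`, `c(b,k) = A` and is adjacent to `q`. The mirrored corner
`(z,q), (b,q), (b,p)`, with colors `Γ, A, B`, is minimal too and forces `c(b,k) = B` instead.
A connected `H` with at least three vertices has such a `k`.
-/

open SimpleGraph

/-- `v` lists the vertices of a `k`-term arithmetic progression in `G`: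
consecutive vertices are at a common distance `d`. -/
def IsAPIn {V : Type*} (G : SimpleGraph V) (k : ℕ) (v : Fin k → V) : Prop :=
  ∃ d : ℕ, ∀ (i : ℕ) (h : i + 1 < k),
    G.dist (v ⟨i, by omega⟩) (v ⟨i + 1, h⟩) = d

/-- The coloring `c` admits a rainbow `k`-AP in `G`: a `k`-AP whose vertices
are pairwise distinct and receive pairwise distinct colors. -/
def HasRainbowAP {V α : Type*} (G : SimpleGraph V) (k : ℕ) (c : V → α) : Prop :=
  ∃ v : Fin k → V, IsAPIn G k v ∧ Function.Injective (c ∘ v)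

/-- The anti-van der Waerden number `aw(G,k)`: the least positive `r` such that
every exact `r`-coloring of `G` contains a rainbow `k`-AP.  (For `r = |V(G)|+1`
there is no surjection onto `r` colors, so the defining set is nonempty and
`aw(G,k) ≤ |V(G)|+1` automatically, matching the convention.) -/
noncomputable def aw {V : Type*} [Fintype V] (G : SimpleGraph V) (k : ℕ) : ℕ :=
  sInf {r : ℕ | 0 < r ∧ ∀ c : V → Fin r, Function.Surjective c → HasRainbowAP G k c}

open Finset

namespace SimpleGraph

variable {V W : Type*} {G : SimpleGraph V}

lemma Reachable.exists_dist_eq_and_dist_eq_sub {u v : V} (h : G.Reachable u v) {t : ℕ}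
    (ht : t ≤ G.dist u v) : ∃ x, G.dist u x = t ∧ G.dist x v = G.dist u v - t := by
  obtain ⟨w, hw⟩ := h.exists_walk_length_eq_dist
  refine ⟨w.getVert t, ?_, ?_⟩
  · rw [← length_eq_dist_of_subwalk hw (w.isSubwalk_take t), Walk.take_length]
    omega
  · rw [← length_eq_dist_of_subwalk hw (w.isSubwalk_drop t), Walk.drop_length, hw]

lemma Connected.dist_boxProd {H : SimpleGraph W} (hG : G.Connected) (hH : H.Connected)
    (x y : V × W) : (G □ H).dist x y = G.dist x.1 y.1 + H.dist x.2 y.2 := by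
  have h := edist_boxProd (G := G) (H := H) x y
  rw [← ((hG.boxProd hH).preconnected x y).coe_dist_eq_edist,
    ← (hG.preconnected _ _).coe_dist_eq_edist, ← (hH.preconnected _ _).coe_dist_eq_edist] at h
  exact_mod_cast h

lemma Connected.exists_adj_ne_ne [Fintype V] (hG : G.Connected) (hV : 3 ≤ Fintype.card V)
    (p q : V) : ∃ k, k ≠ p ∧ k ≠ q ∧ (G.Adj p k ∨ G.Adj q k) := by
  classical
  obtain ⟨k₀, -, hk₀⟩ := exists_mem_notMem_of_card_lt_card (s := {p, q}) (t := univ)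
    (by rw [card_univ]; exact card_le_two.trans_lt hV)
  obtain ⟨d, -, hd, hd'⟩ := (hG.preconnected p k₀).some.exists_boundary_dart
    ({p, q} : Set V) (by simp) (by simpa using hk₀)
  simp only [Set.mem_insert_iff, Set.mem_singleton_iff, not_or] at hd hd'
  refine ⟨d.snd, hd'.1, hd'.2, ?_⟩
  rcases hd with h | h
  exacts [.inl (h ▸ d.adj), .inr (h ▸ d.adj)]

end SimpleGraph

lemma eq_of_not_hasRainbowAP_three {V α : Type*} {G : SimpleGraph V} {c : V → α}
    (h : ¬ HasRainbowAP G 3 c) {x y w : V} (hd : G.dist x y = G.dist y w)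
    (hxy : c x ≠ c y) (hyw : c y ≠ c w) : c x = c w := by
  by_contra hxw
  refine h ⟨![x, y, w], ⟨G.dist x y, ?_⟩, ?_⟩
  · intro i hi
    obtain rfl | rfl : i = 0 ∨ i = 1 := by omega
    exacts [rfl, hd.symm]
  · intro i j hij
    fin_cases i <;> fin_cases j <;> simp_all

section BoxProdColoring

variable {VG VH α : Type*} {G : SimpleGraph VG} {H : SimpleGraph VH} {c : VG × VH → α}

lemma color_eq_of_dist_add_dist_eq (hG : G.Connected) (hH : H.Connected)
    (hnr : ¬ HasRainbowAP (G □ H) 3 c) (x y w : VG × VH)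
    (hd : G.dist x.1 y.1 + H.dist x.2 y.2 = G.dist y.1 w.1 + H.dist y.2 w.2)
    (hxy : c x ≠ c y) (hyw : c y ≠ c w) : c x = c w :=
  eq_of_not_hasRainbowAP_three hnr (by rwa [hG.dist_boxProd hH, hG.dist_boxProd hH]) hxy hyw

def FiberwiseTwoColored (c : VG × VH → α) : Prop :=
  ∀ i a b x, c (a, i) ≠ c (b, i) → c (x, i) = c (a, i) ∨ c (x, i) = c (b, i)

lemma fiberwiseTwoColored_of_card_image_le_two [Fintype VG] [DecidableEq α]
    (h : ∀ i, (univ.image fun x => c (x, i)).card ≤ 2) : FiberwiseTwoColored c := by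
  intro i a b x hab
  by_contra! hx
  have : 2 < (univ.image fun x => c (x, i)).card :=
    two_lt_card.2 ⟨_, mem_image_of_mem _ (mem_univ a), _, mem_image_of_mem _ (mem_univ b),
      _, mem_image_of_mem _ (mem_univ x), hab, Ne.symm hx.1, Ne.symm hx.2⟩
  exact (h i).not_gt this

structure IsRainbowCorner (H : SimpleGraph VH) (c : VG × VH → α) (p q : VH) (z b : VG) : Prop where
  adj : H.Adj p q
  ne_zp_bp : c (z, p) ≠ c (b, p)
  ne_zq_zp : c (z, q) ≠ c (z, p)
  ne_zq_bp : c (z, q) ≠ c (b, p)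

structure IsMinimalRainbowCorner (G : SimpleGraph VG) (H : SimpleGraph VH) (c : VG × VH → α)
    (p q : VH) (z b : VG) : Prop extends IsRainbowCorner H c p q z b where
  dist_le : ∀ p' q' z' b', IsRainbowCorner H c p' q' z' b' → G.dist z b ≤ G.dist z' b'

lemma exists_isRainbowCorner_of_two_lt_card_union [Fintype VG] [DecidableEq α] {p q : VH}
    (hpq : H.Adj p q) (hp : (univ.image fun x => c (x, p)).card ≤ 2)
    (hqp : (univ.image fun x => c (x, q)).card ≤ (univ.image fun x => c (x, p)).card)
    (hpq3 : 2 < ((univ.image fun x => c (x, p)) ∪ (univ.image fun x => c (x, q))).card) :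
    ∃ z b, IsRainbowCorner H c p q z b := by
  have hp2 : 1 < (univ.image fun x => c (x, p)).card := by
    have := card_union_le (univ.image fun x => c (x, p)) (univ.image fun x => c (x, q))
    omega
  obtain ⟨_, ha, _, ha', haa'⟩ := one_lt_card.1 hp2
  obtain ⟨a, -, rfl⟩ := mem_image.1 ha
  obtain ⟨a', -, rfl⟩ := mem_image.1 ha'
  have hsub : ¬ (univ.image fun x => c (x, q)) ⊆ univ.image fun x => c (x, p) := fun hsub => by
    rw [union_eq_left.2 hsub] at hpq3
    omega
  obtain ⟨_, hzq, hz⟩ := not_subset.1 hsub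
  obtain ⟨z, -, rfl⟩ := mem_image.1 hzq
  simp only [mem_image, mem_univ, true_and, not_exists] at hz
  by_cases hza : c (z, p) = c (a, p)
  · exact ⟨z, a', hpq, hza ▸ haa', fun h => hz z h.symm, fun h => hz a' h.symm⟩
  · exact ⟨z, a, hpq, hza, fun h => hz z h.symm, fun h => hz a h.symm⟩

lemma IsRainbowCorner.exists_minimal {p q : VH} {z b : VG} (h : IsRainbowCorner H c p q z b) :
    ∃ p q z b, IsMinimalRainbowCorner G H c p q z b := by
  classical
  have hex : ∃ n, ∃ p q z b, IsRainbowCorner H c p q z b ∧ G.dist z b = n :=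
    ⟨_, p, q, z, b, h, rfl⟩
  obtain ⟨p, q, z, b, h, hn⟩ := Nat.find_spec hex
  refine ⟨p, q, z, b, h, fun p' q' z' b' h' => ?_⟩
  rw [hn]
  exact Nat.find_min' hex ⟨p', q', z', b', h', rfl⟩

lemma IsRainbowCorner.color_zk_eq_zq (hG : G.Connected) (hH : H.Connected)
    (hnr : ¬ HasRainbowAP (G □ H) 3 c) {p q k : VH} {z b : VG} (h : IsRainbowCorner H c p q z b)
    (hkp : H.Adj k p) : c (z, k) = c (z, q) := by
  have hpq := dist_eq_one_iff_adj.2 h.adj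
  have hkp := dist_eq_one_iff_adj.2 hkp
  by_contra hzk
  have hzk' : c (z, k) = c (z, p) := by
    by_contra hne
    exact hzk (color_eq_of_dist_add_dist_eq hG hH hnr (z, k) (z, p) (z, q) (by simp [hpq, hkp])
      hne h.ne_zq_zp.symm)
  exact hzk (color_eq_of_dist_add_dist_eq hG hH hnr (z, k) (b, p) (z, q)
    (by simp [hpq, hkp, G.dist_comm]) (hzk' ▸ h.ne_zp_bp) h.ne_zq_bp.symm)

namespace IsMinimalRainbowCorner

variable {p q : VH} {z b : VG}

lemma dist_pos (hG : G.Connected) (h : IsMinimalRainbowCorner G H c p q z b) :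
    0 < G.dist z b :=
  hG.pos_dist_of_ne fun hzb => h.ne_zp_bp (hzb ▸ rfl)

lemma color_eq_of_dist_lt (hfib : FiberwiseTwoColored c)
    (h : IsMinimalRainbowCorner G H c p q z b) {x : VG} (hx : G.dist z x < G.dist z b) :
    c (x, p) = c (z, p) := by
  refine (hfib p z b x h.ne_zp_bp).resolve_right fun hxb => ?_
  exact (h.dist_le p q z x ⟨h.adj, hxb ▸ h.ne_zp_bp, h.ne_zq_zp, hxb ▸ h.ne_zq_bp⟩).not_gt hx

lemma exists_adj_color_eq (hG : G.Connected) (hfib : FiberwiseTwoColored c)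
    (h : IsMinimalRainbowCorner G H c p q z b) :
    ∃ y, G.Adj y b ∧ G.dist z y + 1 = G.dist z b ∧ c (y, p) = c (z, p) := by
  have hm := h.dist_pos hG
  obtain ⟨y, hzy, hyb⟩ := (hG.preconnected z b).exists_dist_eq_and_dist_eq_sub
    (Nat.sub_le (G.dist z b) 1)
  exact ⟨y, dist_eq_one_iff_adj.1 (by omega), by omega, h.color_eq_of_dist_lt hfib (by omega)⟩

lemma color_bq_eq_zp (hG : G.Connected) (hH : H.Connected) (hnr : ¬ HasRainbowAP (G □ H) 3 c)
    (hfib : FiberwiseTwoColored c) (h : IsMinimalRainbowCorner G H c p q z b) :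
    c (b, q) = c (z, p) := by
  obtain ⟨y, hyb, hzy, hyp⟩ := h.exists_adj_color_eq hG hfib
  have hpq := dist_eq_one_iff_adj.2 h.adj
  have hyb1 := dist_eq_one_iff_adj.2 hyb
  by_contra hbq
  have hbq' : c (b, q) = c (b, p) := by
    by_contra hne
    refine hbq (hyp ▸ color_eq_of_dist_add_dist_eq hG hH hnr (y, p) (b, p) (b, q)
      (by simp [hpq, hyb1]) (hyp ▸ h.ne_zp_bp) (Ne.symm hne)).symm
  have hyq : c (y, q) = c (b, p) := by
    refine ((hfib q z b y (hbq' ▸ h.ne_zq_bp)).resolve_left fun hyq => ?_).trans hbq'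
    exact h.ne_zq_bp (hyq ▸ color_eq_of_dist_add_dist_eq hG hH hnr (b, p) (y, p) (y, q)
      (by simp [hpq, hyb.symm]) (hyp ▸ h.ne_zp_bp.symm) (hyp ▸ hyq ▸ h.ne_zq_zp.symm)).symm
  exact (h.dist_le q p z y ⟨h.adj.symm, hyq ▸ h.ne_zq_bp, h.ne_zq_zp.symm,
    hyq ▸ h.ne_zp_bp⟩).not_gt (by omega)

lemma swap (hG : G.Connected) (hH : H.Connected) (hnr : ¬ HasRainbowAP (G □ H) 3 c)
    (hfib : FiberwiseTwoColored c) (h : IsMinimalRainbowCorner G H c p q z b) :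
    IsMinimalRainbowCorner G H c q p b z := by
  have hbq := h.color_bq_eq_zp hG hH hnr hfib
  refine ⟨⟨h.adj.symm, hbq ▸ h.ne_zq_zp.symm, hbq ▸ h.ne_zp_bp.symm, h.ne_zq_bp.symm⟩, ?_⟩
  intro p' q' z' b' h'
  rw [G.dist_comm]
  exact h.dist_le p' q' z' b' h'

lemma exists_midpoint (hG : G.Connected) (hH : H.Connected) (hnr : ¬ HasRainbowAP (G □ H) 3 c)
    (hfib : FiberwiseTwoColored c) (h : IsMinimalRainbowCorner G H c p q z b) :
    ∃ s, G.dist z s = G.dist s b ∧ G.dist z s + G.dist s b = G.dist z b ∧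
      c (s, p) = c (z, p) := by
  have hm := h.dist_pos hG
  obtain ⟨s, hzs, hsb⟩ := (hG.preconnected z b).exists_dist_eq_and_dist_eq_sub
    (Nat.div_le_self (G.dist z b) 2)
  have hsp : c (s, p) = c (z, p) := h.color_eq_of_dist_lt hfib (by omega)
  refine ⟨s, ?_, by omega, hsp⟩
  by_contra hodd
  refine h.ne_zq_bp (color_eq_of_dist_add_dist_eq hG hH hnr (z, q) (s, p) (b, p) ?_
    (hsp ▸ h.ne_zq_zp) (hsp ▸ h.ne_zp_bp))
  simp only [dist_eq_one_iff_adj.2 h.adj.symm, dist_self]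
  omega

lemma color_bk_eq_zp (hG : G.Connected) (hH : H.Connected) (hnr : ¬ HasRainbowAP (G □ H) 3 c)
    (hfib : FiberwiseTwoColored c) (h : IsMinimalRainbowCorner G H c p q z b) {k : VH}
    (hkp : H.Adj k p) : c (b, k) = c (z, p) := by
  obtain ⟨y, hyb, -, hyp⟩ := h.exists_adj_color_eq hG hfib
  obtain ⟨s, hzs, -, hsp⟩ := h.exists_midpoint hG hH hnr hfib
  have hkp := dist_eq_one_iff_adj.2 hkp
  have hpq := dist_eq_one_iff_adj.2 h.adj
  have hby := dist_eq_one_iff_adj.2 hyb.symm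
  by_contra hbk
  have hbk' : c (b, k) = c (b, p) := by
    by_contra hne
    exact hbk (hyp ▸ color_eq_of_dist_add_dist_eq hG hH hnr (b, k) (b, p) (y, p)
      (by simp [hkp, hby]) hne (hyp ▸ h.ne_zp_bp.symm))
  refine h.ne_zq_bp (hbk' ▸ color_eq_of_dist_add_dist_eq hG hH hnr (b, k) (s, p) (z, q) ?_
    (hbk' ▸ hsp ▸ h.ne_zp_bp.symm) (hsp ▸ h.ne_zq_zp.symm)).symm
  dsimp only
  rw [G.dist_comm, ← hzs, G.dist_comm, hkp, hpq]

lemma adj_of_adj_of_ne (hG : G.Connected) (hH : H.Connected) (hnr : ¬ HasRainbowAP (G □ H) 3 c)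
    (hfib : FiberwiseTwoColored c) (h : IsMinimalRainbowCorner G H c p q z b) {k : VH}
    (hkp : H.Adj k p) (hkq : k ≠ q) : H.Adj k q := by
  obtain ⟨y, hyb, hzy, -⟩ := h.exists_adj_color_eq hG hfib
  obtain ⟨s, hzs, hzsb, -⟩ := h.exists_midpoint hG hH hnr hfib
  have hm := h.dist_pos hG
  have hzk := h.color_zk_eq_zq hG hH hnr hkp
  have hbk := h.color_bk_eq_zp hG hH hnr hfib hkp
  have hyk : c (y, k) = c (z, p) := by
    refine ((hfib k b z y (hbk ▸ hzk ▸ h.ne_zq_zp.symm)).resolve_right fun hyk => ?_).trans hbk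
    have := h.dist_le k p b y ⟨hkp, hbk ▸ hyk ▸ hzk ▸ h.ne_zq_zp.symm, hbk ▸ h.ne_zp_bp.symm,
      hyk ▸ hzk ▸ h.ne_zq_bp.symm⟩
    rw [dist_eq_one_iff_adj.2 hyb.symm] at this
    omega
  by_contra hnkq
  have hqk : H.dist q k = 2 := by
    have := hH.one_lt_dist_of_ne_of_not_adj (Ne.symm hkq) (fun h => hnkq h.symm)
    have := hH.dist_triangle (u := q) (v := p) (w := k)
    rw [dist_eq_one_iff_adj.2 h.adj.symm, dist_eq_one_iff_adj.2 hkp.symm] at this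
    omega
  refine h.ne_zp_bp (hyk ▸ color_eq_of_dist_add_dist_eq hG hH hnr (b, p) (z, q) (y, k) ?_
    h.ne_zq_bp.symm (hyk ▸ h.ne_zq_zp)).symm
  dsimp only
  rw [G.dist_comm, hqk, dist_eq_one_iff_adj.2 h.adj]
  omega

lemma false_of_adj_of_ne (hG : G.Connected) (hH : H.Connected)
    (hnr : ¬ HasRainbowAP (G □ H) 3 c) (hfib : FiberwiseTwoColored c)
    (h : IsMinimalRainbowCorner G H c p q z b) {k : VH} (hkp : H.Adj k p) (hkq : k ≠ q) :
    False := by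
  have hbk := h.color_bk_eq_zp hG hH hnr hfib hkp
  have hbk' := (h.swap hG hH hnr hfib).color_zk_eq_zq hG hH hnr
    (h.adj_of_adj_of_ne hG hH hnr hfib hkp hkq)
  exact h.ne_zp_bp (hbk.symm.trans hbk')

end IsMinimalRainbowCorner

lemma not_isRainbowCorner [Fintype VH] (hG : G.Connected) (hH : H.Connected)
    (hVH : 3 ≤ Fintype.card VH) (hnr : ¬ HasRainbowAP (G □ H) 3 c)
    (hfib : FiberwiseTwoColored c) (p q : VH) (z b : VG) : ¬ IsRainbowCorner H c p q z b := by
  intro h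
  obtain ⟨p, q, z, b, h⟩ := h.exists_minimal (G := G)
  obtain ⟨k, hkp, hkq, hadj | hadj⟩ := hH.exists_adj_ne_ne hVH p q
  · exact h.false_of_adj_of_ne hG hH hnr hfib hadj.symm hkq
  · exact (h.swap hG hH hnr hfib).false_of_adj_of_ne hG hH hnr hfib hadj.symm hkp

end BoxProdColoring

theorem two_colors_adjacent_fibers_general {VG VH : Type*} [Fintype VG] [Fintype VH]
    (G : SimpleGraph VG) (H : SimpleGraph VH)
    (hG : G.Connected) (hH : H.Connected) (hn : 3 ≤ Fintype.card VH)
    (r : ℕ) (c : VG × VH → Fin r)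
    (hnr : ¬ HasRainbowAP (G □ H) 3 c)
    (h2 : ∀ i : VH, (((Finset.univ : Finset VG)).image (fun x => c (x, i))).card ≤ 2) :
    ∀ i j : VH, H.Adj i j →
      ((((Finset.univ : Finset VG)).image (fun x => c (x, i))) ∪
       (((Finset.univ : Finset VG)).image (fun x => c (x, j)))).card ≤ 2 := by
  intro i j hij
  by_contra! h3
  obtain ⟨p, q, z, b, hcorner⟩ : ∃ p q z b, IsRainbowCorner H c p q z b := by
    rcases le_total (univ.image fun x => c (x, j)).card (univ.image fun x => c (x, i)).card
      with hji | hij'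
    · exact ⟨i, j, exists_isRainbowCorner_of_two_lt_card_union hij (h2 i) hji h3⟩
    · exact ⟨j, i, exists_isRainbowCorner_of_two_lt_card_union hij.symm (h2 j) hij'
        (union_comm (univ.image fun x => c (x, i)) _ ▸ h3)⟩
  exact not_isRainbowCorner hG hH hn hnr (fiberwiseTwoColored_of_card_image_le_two h2) p q z b
    hcorner

/-- in `G □ H` (with `G`, `H` connected, `|V(H)| ≥ 3`), if an
exact `r`-coloring `c` (`r ≥ 3`) has no rainbow 3-AP and every copy `G_i`
(the fiber of `G` over `v_i ∈ V(H)`) uses at most two colors, then for every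
edge `v_i v_j` of `H` the colors used on `V(G_i) ∪ V(G_j)` number at most two. -/
theorem two_colors_adjacent_fibers {VG VH : Type*} [Fintype VG] [Fintype VH]
    (G : SimpleGraph VG) (H : SimpleGraph VH)
    (hG : G.Connected) (hH : H.Connected) (hn : 3 ≤ Fintype.card VH)
    (r : ℕ) (hr : 3 ≤ r) (c : VG × VH → Fin r) (hc : Function.Surjective c)
    (hnr : ¬ HasRainbowAP (G □ H) 3 c)
    (h2 : ∀ i : VH, (((Finset.univ : Finset VG)).image (fun x => c (x, i))).card ≤ 2) :
    ∀ i j : VH, H.Adj i j →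
      ((((Finset.univ : Finset VG)).image (fun x => c (x, i))) ∪
       (((Finset.univ : Finset VG)).image (fun x => c (x, j)))).card ≤ 2 :=
  two_colors_adjacent_fibers_general G H hG hH hn r c hnr h2
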